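/- arXiv:1302.2846 — 2 statements merged into one kernel-verified Lean document; each statement's English description precedes it below -/
import Mathlib

section
/- Let α be a (2,0)-form on ℂ⁴ (identified with ℝ⁸ with the standard SU(4)-structure) satisfying L(α) = ε·ᾱ with ε = ±1, and set a = (1/2)(α + ᾱ). Then a ∧ a ∧ Ω₀ = (1 + 2ε)|a|² · vol; in particular a ∧ a ∧ Ω₀ = 3|a|² vol when ε = +1 and a ∧ a ∧ Ω₀ = −|a|² vol when ε = −1. -/
/- STATEMENT 4: Let α be a (2,0)-form on ℂ⁴ = ℝ⁸ with L(α) = ε·ᾱ, ε = ±1, and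
   a = ½(α + ᾱ).  Then a ∧ a ∧ Ω₀ = (1 + 2ε)|a|² vol.

   Formalization: we work abstractly in the complexified exterior algebra Λ of ℝ⁸.
   The data (α, ᾱ, θ, θ̄, ω, vol) are encoded by the algebraic identities which
   characterize them:
   * n = |α|² ≥ 0, so that |a|² = n/2;
   * L(α) = ε ᾱ translates (via α ∧ conj(L α) = ¼|α|² θ) into α∧α = (εn/4) θ and
     ᾱ∧ᾱ = (εn/4) θ̄;
   * α ∧ ᾱ ∧ ω² = 2|α|² vol and θ ∧ θ̄ = 16 vol (standard normalizations);
   * type considerations: θ∧θ = θ̄∧θ̄ = 0, θ∧ω² = θ̄∧ω² = 0, α∧ᾱ∧θ = α∧ᾱ∧θ̄ = 0,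
     and even-degree forms commute.
   The Spin(7)-form is Ω₀ = ½ω² + ½(θ + θ̄). -/

noncomputable section

open ExteriorAlgebra

abbrev Lam : Type := ExteriorAlgebra ℂ (Fin 8 → ℂ)

set_option maxHeartbeats 1600000 in
theorem a_wedge_a_wedge_Omega (α αbar θ θbar ω vol : Lam) (ε n : ℝ)
    (hε : ε = 1 ∨ ε = -1) (hn : 0 ≤ n)
    (hθθbar : θ * θbar = (16 : ℂ) • vol)
    (hθbarθ : θbar * θ = (16 : ℂ) • vol)
    (hαα : α * α = ((ε * n / 4 : ℝ) : ℂ) • θ)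
    (hᾱᾱ : αbar * αbar = ((ε * n / 4 : ℝ) : ℂ) • θbar)
    (hmix : α * αbar * (ω * ω) = ((2 * n : ℝ) : ℂ) • vol)
    (hcomm : α * αbar = αbar * α)
    (hθ2 : θ * θ = 0) (hθbar2 : θbar * θbar = 0)
    (hθω : θ * (ω * ω) = 0) (hθbarω : θbar * (ω * ω) = 0)
    (hmixθ : α * αbar * θ = 0) (hmixθbar : α * αbar * θbar = 0) :
    ((1 / 2 : ℂ) • (α + αbar)) * ((1 / 2 : ℂ) • (α + αbar)) *
        ((1 / 2 : ℂ) • (ω * ω) + (1 / 2 : ℂ) • (θ + θbar)) =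
      (((1 + 2 * ε) * (n / 2) : ℝ) : ℂ) • vol := by
  have h2 : (α + αbar) * (α + αbar)
      = ((ε * n / 4 : ℝ) : ℂ) • θ + ((ε * n / 4 : ℝ) : ℂ) • θbar + (2 : ℂ) • (α * αbar) := by
    rw [add_mul, mul_add, mul_add, hαα, hᾱᾱ, ← hcomm, two_smul]
    abel
  have h3 : (α + αbar) * (α + αbar) * ((ω * ω) + (θ + θbar))
      = ((4 * (1 + 2 * ε) * n : ℝ) : ℂ) • vol := by
    rw [h2]
    simp only [add_mul, mul_add, smul_mul_assoc, hθθbar, hθbarθ, hθ2, hθbar2, hθω, hθbarω,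
      hmix, hmixθ, hmixθbar, smul_add, smul_zero, zero_add, add_zero, smul_smul]
    match_scalars
    push_cast
    ring
  calc ((1 / 2 : ℂ) • (α + αbar)) * ((1 / 2 : ℂ) • (α + αbar)) *
        ((1 / 2 : ℂ) • (ω * ω) + (1 / 2 : ℂ) • (θ + θbar))
      = (1/8 : ℂ) • ((α + αbar) * (α + αbar) * ((ω * ω) + (θ + θbar))) := by
        simp only [smul_mul_assoc, mul_smul_comm, ← smul_add, smul_smul]
        match_scalars <;> ring
    _ = (((1 + 2 * ε) * (n / 2) : ℝ) : ℂ) • vol := by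
        rw [h3, smul_smul]; match_scalars; push_cast; ring

end
end

section
/- For every real primitive (1,1)-form α on ℂ⁴ and every (2,0)-form c with |c| = 2√2 (e.g. c = dz₁₂ + dz₃₄), setting β = −α² and defining k by β ∧ ω² = 24k vol, one has (β − 3k ω²) ∧ c ∧ c̄ ≤ 0. -/
/- STATEMENT 13: for every real primitive (1,1)-form α on ℂ⁴ and c = dz₁₂ + dz₃₄
   (the representative, via SU(4)-transitivity, of the (2,0)-forms with |c| = 2√2),
   setting β = −α² and defining k by β ∧ ω² = 24k vol, one has
   (β − 3k ω²) ∧ c ∧ c̄ ≤ 0, i.e. (β − 3k ω²) ∧ c ∧ c̄ = r · vol with r ≤ 0. -/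

noncomputable section

open ExteriorAlgebra

/-- The 1-form dx_{i+1} (0-indexed). -/
def dx (i : Fin 8) : Lam := ExteriorAlgebra.ι ℂ (Pi.single i 1)

/-- The standard volume form vol = dx₁₂₃₄₅₆₇₈. -/
def vol : Lam := dx 0 * dx 1 * dx 2 * dx 3 * dx 4 * dx 5 * dx 6 * dx 7

/-- The complex 1-form dz_{j+1} = dx_{2j+1} + i dx_{2j+2} (0-indexed). -/
def dz (j : Fin 4) : Lam :=
  dx ⟨2 * (j : ℕ), by omega⟩ + Complex.I • dx ⟨2 * (j : ℕ) + 1, by omega⟩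

/-- The conjugate complex 1-form dz̄_{j+1}. -/
def dzbar (j : Fin 4) : Lam :=
  dx ⟨2 * (j : ℕ), by omega⟩ - Complex.I • dx ⟨2 * (j : ℕ) + 1, by omega⟩

/-- The standard Kähler form ω = dx₁₂ + dx₃₄ + dx₅₆ + dx₇₈. -/
def omega : Lam := dx 0 * dx 1 + dx 2 * dx 3 + dx 4 * dx 5 + dx 6 * dx 7

/-- The holomorphic volume form θ = dz₁ ∧ dz₂ ∧ dz₃ ∧ dz₄. -/
def theta : Lam := dz 0 * dz 1 * dz 2 * dz 3

/-- The conjugate θ̄ = dz̄₁ ∧ dz̄₂ ∧ dz̄₃ ∧ dz̄₄. -/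
def thetabar : Lam := dzbar 0 * dzbar 1 * dzbar 2 * dzbar 3

/-- The standard Kähler form ω = (i/2) Σ_j dz_j ∧ dz̄_j. -/
def omegaK : Lam := (Complex.I / 2) • (∑ j : Fin 4, dz j * dzbar j)

/-- c = dz₁₂ + dz₃₄ and its conjugate. -/
def cform : Lam := dz 0 * dz 1 + dz 2 * dz 3
def cformbar : Lam := dzbar 0 * dzbar 1 + dzbar 2 * dzbar 3

/-!
Sorting anticommuting generators in the coframe dz₁, dz̄₁, …, dz₄, dz̄₄ computes the top-degree
products: for α = Σ aᵢⱼ dzᵢ ∧ dz̄ⱼ, α² ∧ ω² = −16 σ₂(a) vol with σ₂ the sum of the principal 2×2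
minors, α² ∧ c ∧ c̄ = −32 m(a) vol with m the sum of the 2×2 minors whose row and column pairs are
among {1,2}, {3,4}, and ω² ∧ c ∧ c̄ = 16 vol. Hence 24k = 16 σ₂(a) and
(β − 3kω²) ∧ c ∧ c̄ = 32 (m(a) − σ₂(a)) vol. For a real (aⱼᵢ = −āᵢⱼ) primitive (tr a = 0) form,
m(a) − σ₂(a) = −((Im(a₁₁ + a₂₂))² + |a₁₃ − ā₂₄|² + |a₁₄ + ā₂₃|²) ≤ 0.
-/

open ComplexConjugate

namespace ExteriorAlgebra

variable {R M : Type*} [CommRing R] [AddCommGroup M] [Module R M]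

theorem ι_mul_ι_comm (x y : M) : ι R x * ι R y = -(ι R y * ι R x) :=
  eq_neg_of_add_eq_zero_left (ι_add_mul_swap x y)

theorem ι_mul_ι_mul_comm (x y : M) (z : ExteriorAlgebra R M) :
    ι R x * (ι R y * z) = -(ι R y * (ι R x * z)) := by
  rw [← mul_assoc, ι_mul_ι_comm, neg_mul, mul_assoc]

theorem ι_mul_ι_mul_self (x : M) (z : ExteriorAlgebra R M) : ι R x * (ι R x * z) = 0 := by
  rw [← mul_assoc, ι_sq_zero, zero_mul]

theorem ι_add_smul_mul_ι_sub_smul (x y : M) (c : R) :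
    (ι R x + c • ι R y) * (ι R x - c • ι R y) = (-2 * c) • (ι R x * ι R y) := by
  simp only [add_mul, mul_sub, smul_mul_assoc, mul_smul_comm, ι_sq_zero, smul_zero,
    ι_mul_ι_comm y x, smul_neg]
  module

end ExteriorAlgebra

def dzVec (j : Fin 4) : Fin 8 → ℂ :=
  Pi.single ⟨2 * (j : ℕ), by omega⟩ 1 + Complex.I • Pi.single ⟨2 * (j : ℕ) + 1, by omega⟩ 1

def dzbarVec (j : Fin 4) : Fin 8 → ℂ :=
  Pi.single ⟨2 * (j : ℕ), by omega⟩ 1 - Complex.I • Pi.single ⟨2 * (j : ℕ) + 1, by omega⟩ 1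

/-- The coframe dz₁, dz̄₁, …, dz₄, dz̄₄; the simp lemmas below sort monomials by this index. -/
def coframe (i : Fin 8) : Lam :=
  ι ℂ (![dzVec 0, dzbarVec 0, dzVec 1, dzbarVec 1, dzVec 2, dzbarVec 2, dzVec 3, dzbarVec 3] i)

theorem dz_eq_coframe : dz = ![coframe 0, coframe 2, coframe 4, coframe 6] := by
  funext j; fin_cases j <;> simp [dz, dx, coframe, dzVec]

theorem dzbar_eq_coframe : dzbar = ![coframe 1, coframe 3, coframe 5, coframe 7] := by
  funext j; fin_cases j <;> simp [dzbar, dx, coframe, dzbarVec]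

@[simp] theorem coframe_mul_self (i : Fin 8) : coframe i * coframe i = 0 := ι_sq_zero _

@[simp] theorem coframe_mul_coframe_mul_self (i : Fin 8) (z : Lam) :
    coframe i * (coframe i * z) = 0 := ι_mul_ι_mul_self _ _

@[simp] theorem coframe_mul_coframe_of_lt {i j : Fin 8} (_ : j < i) :
    coframe i * coframe j = -(coframe j * coframe i) := ι_mul_ι_comm _ _

@[simp] theorem coframe_mul_coframe_mul_of_lt {i j : Fin 8} (_ : j < i) (z : Lam) :
    coframe i * (coframe j * z) = -(coframe j * (coframe i * z)) := ι_mul_ι_mul_comm _ _ _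

theorem dz_mul_dzbar (j : Fin 4) :
    dz j * dzbar j =
      (-2 * Complex.I) • (dx ⟨2 * (j : ℕ), by omega⟩ * dx ⟨2 * (j : ℕ) + 1, by omega⟩) :=
  ι_add_smul_mul_ι_sub_smul _ _ _

theorem coframe_mul_eq_smul_vol :
    coframe 0 * (coframe 1 * (coframe 2 * (coframe 3 * (coframe 4 * (coframe 5 *
      (coframe 6 * coframe 7)))))) = (16 : ℂ) • vol := by
  have h16 : (-2 * Complex.I) * (-2 * Complex.I) * (-2 * Complex.I) * (-2 * Complex.I) = 16 := by
    ring_nf; norm_num [Complex.I_pow_four]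
  calc _ = dz 0 * dzbar 0 * (dz 1 * dzbar 1) * (dz 2 * dzbar 2) * (dz 3 * dzbar 3) := by
          simp only [dz_eq_coframe, dzbar_eq_coframe, mul_assoc, Matrix.cons_val]
    _ = ((-2 * Complex.I) * (-2 * Complex.I) * (-2 * Complex.I) * (-2 * Complex.I)) • vol := by
          simp only [dz_mul_dzbar, smul_mul_smul_comm, vol, mul_assoc]; rfl
    _ = (16 : ℂ) • vol := by rw [h16]

theorem omegaK_sq_mul_cform_mul_cformbar :
    omegaK * omegaK * cform * cformbar = (16 : ℂ) • vol := by
  simp only [omegaK, cform, cformbar, Fin.sum_univ_four, dz_eq_coframe, dzbar_eq_coframe,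
    Matrix.cons_val]
  simp only [smul_add, mul_add, add_mul, mul_assoc, Fin.reduceLT, Fin.isValue, zero_lt_one,
    coframe_mul_coframe_mul_of_lt, coframe_mul_coframe_of_lt, coframe_mul_coframe_mul_self,
    coframe_mul_self, mul_neg, neg_neg, smul_mul_assoc, mul_smul_comm, mul_zero, neg_zero,
    smul_zero, add_zero, zero_add, smul_neg, coframe_mul_eq_smul_vol, smul_smul]
  match_scalars
  ring_nf; simp only [Complex.I_sq]; ring

def alphaForm (a : Fin 4 → Fin 4 → ℂ) : Lam := ∑ i : Fin 4, ∑ j : Fin 4, a i j • (dz i * dzbar j)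

def minor2 (a : Fin 4 → Fin 4 → ℂ) (i j k l : Fin 4) : ℂ := a i k * a j l - a i l * a j k

def principalMinorSum (a : Fin 4 → Fin 4 → ℂ) : ℂ :=
  minor2 a 0 1 0 1 + minor2 a 0 2 0 2 + minor2 a 0 3 0 3 + minor2 a 1 2 1 2 + minor2 a 1 3 1 3 +
    minor2 a 2 3 2 3

/-- Rows and columns range over the index pairs {0,1}, {2,3} of the two terms of `cform`. -/
def cformMinorSum (a : Fin 4 → Fin 4 → ℂ) : ℂ :=
  minor2 a 0 1 0 1 + minor2 a 0 1 2 3 + minor2 a 2 3 0 1 + minor2 a 2 3 2 3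

theorem alphaForm_sq_mul_omegaK_sq (a : Fin 4 → Fin 4 → ℂ) :
    alphaForm a * alphaForm a * (omegaK * omegaK) = (-16 * principalMinorSum a) • vol := by
  simp only [alphaForm, omegaK, principalMinorSum, minor2, Fin.sum_univ_four, dz_eq_coframe,
    dzbar_eq_coframe, Matrix.cons_val]
  simp only [smul_add, mul_add, add_mul, mul_assoc, Fin.reduceLT, Fin.isValue, zero_lt_one,
    coframe_mul_coframe_mul_of_lt, coframe_mul_coframe_of_lt, coframe_mul_coframe_mul_self,
    coframe_mul_self, neg_mul, mul_neg, neg_neg, smul_mul_assoc, mul_smul_comm, mul_zero,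
    neg_zero, smul_zero, add_zero, zero_add, neg_add_rev, smul_neg, coframe_mul_eq_smul_vol,
    smul_smul]
  match_scalars
  ring_nf; simp only [Complex.I_sq]; ring

theorem alphaForm_sq_mul_cform_mul_cformbar (a : Fin 4 → Fin 4 → ℂ) :
    alphaForm a * alphaForm a * cform * cformbar = (-32 * cformMinorSum a) • vol := by
  simp only [alphaForm, cform, cformbar, cformMinorSum, minor2, Fin.sum_univ_four, dz_eq_coframe,
    dzbar_eq_coframe, Matrix.cons_val]
  simp only [smul_add, mul_add, add_mul, mul_assoc, Fin.reduceLT, Fin.isValue, zero_lt_one,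
    coframe_mul_coframe_mul_of_lt, coframe_mul_coframe_of_lt, coframe_mul_coframe_mul_self,
    coframe_mul_self, neg_mul, mul_neg, neg_neg, smul_mul_assoc, mul_smul_comm, mul_zero,
    neg_zero, smul_zero, add_zero, zero_add, neg_add_rev, smul_neg, coframe_mul_eq_smul_vol,
    smul_smul]
  match_scalars
  ring

theorem ofReal_im_sq_of_conj_eq_neg {s : ℂ} (hs : conj s = -s) : (s.im : ℂ) ^ 2 = -s ^ 2 := by
  have hre : s.re = 0 := by
    have := congrArg Complex.re hs
    simp only [Complex.conj_re, Complex.neg_re] at this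
    linarith
  have hs' : s = s.im * Complex.I := by apply Complex.ext <;> simp [hre]
  linear_combination (s + s.im * Complex.I) * hs' + (s.im : ℂ) ^ 2 * Complex.I_sq

theorem cformMinorSum_sub_principalMinorSum (a : Fin 4 → Fin 4 → ℂ)
    (hreal : ∀ i j, a j i = -conj (a i j)) (hprim : ∑ i : Fin 4, a i i = 0) :
    cformMinorSum a - principalMinorSum a =
      -(((a 0 0 + a 1 1).im ^ 2 + ‖a 0 2 - conj (a 1 3)‖ ^ 2 +
        ‖a 0 3 + conj (a 1 2)‖ ^ 2 : ℝ) : ℂ) := by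
  have h33 : a 3 3 = -(a 0 0 + a 1 1 + a 2 2) := by
    rw [Fin.sum_univ_four] at hprim; linear_combination hprim
  have hs : conj (a 0 0 + a 1 1) = -(a 0 0 + a 1 1) := by
    rw [map_add]; linear_combination hreal 0 0 + hreal 1 1
  push_cast
  rw [ofReal_im_sq_of_conj_eq_neg hs, ← Complex.mul_conj', ← Complex.mul_conj']
  simp only [cformMinorSum, principalMinorSum, minor2, map_sub, map_add, Complex.conj_conj,
    hreal 0 1, hreal 0 2, hreal 0 3, hreal 1 2, hreal 1 3, hreal 2 3, h33]
  ring

theorem bogomolov_type_inequality_for_neg_alpha_sq (a : Fin 4 → Fin 4 → ℂ)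
    (hreal : ∀ i j, a j i = -(starRingEnd ℂ) (a i j))
    (hprim : ∑ i : Fin 4, a i i = 0) (k : ℝ)
    (hk : -((∑ i : Fin 4, ∑ j : Fin 4, a i j • (dz i * dzbar j)) *
          (∑ i : Fin 4, ∑ j : Fin 4, a i j • (dz i * dzbar j))) * (omegaK * omegaK) =
        ((24 * k : ℝ) : ℂ) • vol) :
    ∃ r : ℝ, r ≤ 0 ∧
      (-((∑ i : Fin 4, ∑ j : Fin 4, a i j • (dz i * dzbar j)) *
            (∑ i : Fin 4, ∑ j : Fin 4, a i j • (dz i * dzbar j))) -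
          ((3 * k : ℝ) : ℂ) • (omegaK * omegaK)) * cform * cformbar = (r : ℂ) • vol := by
  change -(alphaForm a * alphaForm a) * (omegaK * omegaK) = _ at hk
  refine ⟨-32 * ((a 0 0 + a 1 1).im ^ 2 + ‖a 0 2 - conj (a 1 3)‖ ^ 2 + ‖a 0 3 + conj (a 1 2)‖ ^ 2),
    mul_nonpos_of_nonpos_of_nonneg (by norm_num) (by positivity), ?_⟩
  change (-(alphaForm a * alphaForm a) - _) * cform * cformbar = _
  have hω : ((3 * k : ℝ) : ℂ) • (omegaK * omegaK * cform * cformbar) =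
      (32 * principalMinorSum a) • vol := by
    rw [omegaK_sq_mul_cform_mul_cformbar, smul_smul,
      show ((3 * k : ℝ) : ℂ) * 16 = 2 * ((24 * k : ℝ) : ℂ) by push_cast; ring, mul_smul, ← hk,
      neg_mul, alphaForm_sq_mul_omegaK_sq, ← neg_smul, smul_smul]
    congr 1; ring
  calc _ = -(alphaForm a * alphaForm a * cform * cformbar) -
        ((3 * k : ℝ) : ℂ) • (omegaK * omegaK * cform * cformbar) := by
        simp only [sub_mul, neg_mul, smul_mul_assoc]
    _ = (32 * (cformMinorSum a - principalMinorSum a)) • vol := by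
        rw [alphaForm_sq_mul_cform_mul_cformbar, hω]; module
    _ = _ := by
        rw [cformMinorSum_sub_principalMinorSum a hreal hprim]; congr 1; push_cast; ring

end
end
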